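/- For all α ∈ ℝ and s ≥ 0, D_P(α, s) = v·r if and only if α = −ρ/r. Moreover, for every s ≥ 0, D_C(−ρ/r, s) ≥ D_C(−ρ/r, 0) = v·ρ²/r. Hence the maximum-privacy equilibrium is achieved by Y = X − (ρ/r)θ with no added noise, at distortion v·ρ²/r. -/

import Mathlib

/-- `Q α = 1 + 2αρ + α²r`, the normalized second moment of `Y = X + αθ` (divided by `v`). -/
noncomputable def Q (ρ r α : ℝ) : ℝ := 1 + 2 * α * ρ + α ^ 2 * r

/-- Distortion `D_C(α, s) = E(X − E[X|Y])²` for `Y = X + αθ + S`, `S ~ N(0, s)`. -/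
noncomputable def DC (v ρ r α s : ℝ) : ℝ :=
  v * (1 - (1 + α * ρ) ^ 2 / (Q ρ r α + s / v))

/-- Privacy level `D_P(α, s) = E(θ − E[θ|Y])²` for `Y = X + αθ + S`, `S ~ N(0, s)`. -/
noncomputable def DP (v ρ r α s : ℝ) : ℝ :=
  v * (r - (ρ + r * α) ^ 2 / (Q ρ r α + s / v))

/-! At `α = -ρ/r` the signal `X + αθ` is uncorrelated with `θ`, i.e. `ρ + rα = 0`; this kills the
numerator of the privacy loss in `D_P`. On that line `Q = 1 + αρ`, so the distortion numerator
is `Q²`, and `D_C(α, s) = v(1 - Q²/(Q + s/v))` is smallest at `s = 0`, where it is `v(1 - Q) = vρ²/r`. -/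

section

variable {v ρ r α s : ℝ}

theorem r_mul_Q (ρ r α : ℝ) : r * Q ρ r α = (ρ + r * α) ^ 2 + (r - ρ ^ 2) := by
  unfold Q; ring

theorem Q_pos (hr : ρ ^ 2 < r) : 0 < Q ρ r α := by
  have hr₀ : 0 < r := (sq_nonneg ρ).trans_lt hr
  have : 0 < r * Q ρ r α := by
    rw [r_mul_Q]; nlinarith [sq_nonneg (ρ + r * α)]
  exact pos_of_mul_pos_right this hr₀.le

theorem Q_add_div_pos (hv : 0 < v) (hr : ρ ^ 2 < r) (hs : 0 ≤ s) : 0 < Q ρ r α + s / v :=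
  add_pos_of_pos_of_nonneg (Q_pos hr) (div_nonneg hs hv.le)

theorem DP_eq_mul_iff (hv : v ≠ 0) (hQ : 0 < Q ρ r α + s / v) :
    DP v ρ r α s = v * r ↔ ρ + r * α = 0 := by
  unfold DP
  rw [mul_right_inj' hv, sub_eq_self, div_eq_zero_iff, or_iff_left hQ.ne', sq_eq_zero_iff]

theorem DC_zero_le_DC (hv : 0 < v) (hQ : 0 < Q ρ r α) (hs : 0 ≤ s) :
    DC v ρ r α 0 ≤ DC v ρ r α s := by
  unfold DC
  gcongr

theorem Q_of_add_mul_eq_zero (h : ρ + r * α = 0) : Q ρ r α = 1 + α * ρ := by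
  unfold Q; linear_combination α * h

theorem DC_zero_of_add_mul_eq_zero (h : ρ + r * α = 0) (hQ : Q ρ r α ≠ 0) :
    DC v ρ r α 0 = -v * α * ρ := by
  unfold DC
  rw [zero_div, add_zero, ← Q_of_add_mul_eq_zero h, sq, mul_div_cancel_right₀ _ hQ,
    Q_of_add_mul_eq_zero h]
  ring

end

theorem max_privacy_endpoint_general (v ρ r : ℝ) (hv : 0 < v) (hr : ρ ^ 2 < r) :
    (∀ (α s : ℝ), 0 ≤ s → (DP v ρ r α s = v * r ↔ α = -ρ / r)) ∧
    (∀ s : ℝ, 0 ≤ s → DC v ρ r (-ρ / r) s ≥ DC v ρ r (-ρ / r) 0) ∧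
    DC v ρ r (-ρ / r) 0 = v * ρ ^ 2 / r := by
  have hr₀ : r ≠ 0 := ((sq_nonneg ρ).trans_lt hr).ne'
  have h_uncorrelated_iff (α : ℝ) : ρ + r * α = 0 ↔ α = -ρ / r := by
    rw [add_eq_zero_iff_eq_neg', eq_div_iff hr₀, mul_comm]
  refine ⟨fun α s hs => ?_, fun s hs => DC_zero_le_DC hv (Q_pos hr) hs, ?_⟩
  · rw [DP_eq_mul_iff hv.ne' (Q_add_div_pos hv hr hs), h_uncorrelated_iff]
  · rw [DC_zero_of_add_mul_eq_zero ((h_uncorrelated_iff _).2 rfl) (Q_pos hr).ne']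
    field_simp

/-- The maximum-privacy equilibrium: `D_P(α,s) = vr` iff `α = −ρ/r`, and at `α = −ρ/r`
the distortion is minimized by adding no noise, with `D_C(−ρ/r, 0) = vρ²/r`. -/
theorem max_privacy_endpoint (v ρ r : ℝ) (hv : 0 < v) (hρ : 0 ≤ ρ) (hr : ρ ^ 2 < r) :
    (∀ (α s : ℝ), 0 ≤ s → (DP v ρ r α s = v * r ↔ α = -ρ / r)) ∧
    (∀ s : ℝ, 0 ≤ s → DC v ρ r (-ρ / r) s ≥ DC v ρ r (-ρ / r) 0) ∧
    DC v ρ r (-ρ / r) 0 = v * ρ ^ 2 / r :=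
  max_privacy_endpoint_general v ρ r hv hr
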